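/- arXiv:2104.09939 — 3 statements merged into one kernel-verified Lean document; each statement's English description precedes it below -/
import Mathlib

section
/- Let K be the middle-third Cantor set. Let I = [a, a+3t] and J = [b, b+3t] be disjoint closed intervals in [2/3, 1] with t > 0, and let A_I, A_J : [0,1] → I, J be the orientation-preserving affine bijections. Then {xy : x ∈ A_I(K), y ∈ A_J(K)} = {xy : x ∈ I, y ∈ J}. -/
/-!
Split each of two cells `[A, A + 3u]`, `[B, B + 3u]` into its outer thirds. If the gap `B - A` is
at least `3u` and `B + 3u ≤ 3A`, the product ranges of the four pairs of thirds overlap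
consecutively and so cover `[AB, (A + 3u)(B + 3u)]`, and both conditions pass to every pair of
thirds. Iterating, every `c` in the product range is `(a + 3tx)(b + 3ty)` with `x, y` in the
`n`-th pre-Cantor set, for each `n`; these solution sets are nested and compact, so some `x, y`
in the Cantor set itself work.
-/

open Set

noncomputable def cantorK : Set ℝ :=
  {x | ∃ α : ℕ → ℝ, (∀ k, α k = 0 ∨ α k = 2) ∧ x = ∑' k : ℕ, α k / 3 ^ (k + 1)}

def Pset (E F : Set ℝ) : Set ℝ := Set.image2 (· * ·) E F

theorem cantorK_eq_cantorSet : cantorK = cantorSet := by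
  rw [cantorSet_eq_zero_two_ofDigits]
  ext x
  constructor
  · rintro ⟨α, hα, rfl⟩
    refine ⟨fun k => if α k = 0 then 0 else 2, fun k => by dsimp only; split_ifs <;> decide, ?_⟩
    simp only [Real.ofDigits, Real.ofDigitsTerm]
    congr 1 with k
    rcases hα k with h | h <;> simp [h, div_eq_mul_inv]
  · rintro ⟨d, hd, rfl⟩
    refine ⟨fun k => (d k : ℝ), fun k => ?_, ?_⟩
    · show ((d k : ℕ) : ℝ) = 0 ∨ ((d k : ℕ) : ℝ) = 2
      have hk := hd k
      revert hk
      generalize d k = i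
      fin_cases i <;> simp
    · simp only [Real.ofDigits, Real.ofDigitsTerm]
      rfl

theorem add_div_three_mem_preCantorSet_succ {n : ℕ} {d x : ℝ} (hd : d = 0 ∨ d = 2)
    (hx : x ∈ preCantorSet n) : (d + x) / 3 ∈ preCantorSet (n + 1) := by
  rcases hd with rfl | rfl
  · exact .inl ⟨x, hx, by ring⟩
  · exact .inr ⟨x, hx, rfl⟩

theorem exists_digits_mem_Icc_mul {A B u c : ℝ} (hu : 0 ≤ u) (hgap : u ≤ B - A)
    (hratio : B ≤ 3 * (A + u)) (hc : c ∈ Icc (A * B) ((A + 3 * u) * (B + 3 * u))) :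
    ∃ d e : ℝ, (d = 0 ∨ d = 2) ∧ (e = 0 ∨ e = 2) ∧
      c ∈ Icc ((A + d * u) * (B + e * u)) ((A + d * u + u) * (B + e * u + u)) := by
  obtain ⟨hc₁, hc₂⟩ := hc
  -- the ranges for the digit pairs (0,0), (0,2), (2,0), (2,2) overlap consecutively
  by_cases h₁ : c ≤ (A + u) * (B + u)
  · exact ⟨0, 0, .inl rfl, .inl rfl, by linarith, by linarith⟩
  by_cases h₂ : c ≤ (A + u) * (B + 3 * u)
  · exact ⟨0, 2, .inl rfl, .inr rfl, by nlinarith, by linarith⟩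
  by_cases h₃ : c ≤ (A + 3 * u) * (B + u)
  · exact ⟨2, 0, .inr rfl, .inl rfl, by nlinarith, by linarith⟩
  · exact ⟨2, 2, .inr rfl, .inr rfl, by nlinarith, by linarith⟩

structure Admissible (c A B u : ℝ) : Prop where
  gap : 3 * u ≤ B - A
  ratio : B + 3 * u ≤ 3 * A
  mem : c ∈ Icc (A * B) ((A + 3 * u) * (B + 3 * u))

theorem Admissible.exists_refine {c A B u : ℝ} (h : Admissible c A B u) (hu : 0 ≤ u) :
    ∃ d e : ℝ, (d = 0 ∨ d = 2) ∧ (e = 0 ∨ e = 2) ∧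
      Admissible c (A + d * u) (B + e * u) (u / 3) := by
  obtain ⟨d, e, hd, he, hc⟩ :=
    exists_digits_mem_Icc_mul hu (by linarith [h.gap]) (by linarith [h.ratio]) h.mem
  refine ⟨d, e, hd, he, ⟨?_, ?_, by convert hc using 3 <;> ring⟩⟩ <;>
    rcases hd with rfl | rfl <;> rcases he with rfl | rfl <;> linarith [h.gap, h.ratio]

theorem Admissible.exists_mem_preCantorSet {c A B u : ℝ} (h : Admissible c A B u) (hu : 0 ≤ u)
    (n : ℕ) :
    ∃ x ∈ preCantorSet n, ∃ y ∈ preCantorSet n, (A + 3 * u * x) * (B + 3 * u * y) = c := by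
  induction n generalizing A B u with
  | zero =>
    obtain ⟨x, hx, hxc⟩ := intermediate_value_Icc zero_le_one
      (f := fun x => (A + 3 * u * x) * (B + 3 * u * x)) (by fun_prop)
      (by simpa using h.mem)
    exact ⟨x, hx, x, hx, hxc⟩
  | succ n ih =>
    obtain ⟨d, e, hd, he, h'⟩ := h.exists_refine hu
    obtain ⟨x, hx, y, hy, hxy⟩ := ih h' (by positivity)
    refine ⟨(d + x) / 3, add_div_three_mem_preCantorSet_succ hd hx,
      (e + y) / 3, add_div_three_mem_preCantorSet_succ he hy, ?_⟩
    rw [← hxy]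
    ring

theorem Admissible.exists_mem_cantorSet {c A B u : ℝ} (h : Admissible c A B u) (hu : 0 ≤ u) :
    ∃ x ∈ cantorSet, ∃ y ∈ cantorSet, (A + 3 * u * x) * (B + 3 * u * y) = c := by
  set f : ℝ × ℝ → ℝ := fun p => (A + 3 * u * p.1) * (B + 3 * u * p.2)
  set F : ℕ → Set (ℝ × ℝ) := fun n => preCantorSet n ×ˢ preCantorSet n ∩ f ⁻¹' {c}
  have hF : ∀ n, IsClosed (F n) := fun n =>
    ((isClosed_preCantorSet n).prod (isClosed_preCantorSet n)).inter
      (isClosed_singleton.preimage (by fun_prop))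
  obtain ⟨p, hp⟩ := IsCompact.nonempty_iInter_of_sequence_nonempty_isCompact_isClosed F
    (fun n => inter_subset_inter_left _
      (prod_mono (preCantorSet_antitone n.le_succ) (preCantorSet_antitone n.le_succ)))
    (fun n => by
      obtain ⟨x, hx, y, hy, hxy⟩ := h.exists_mem_preCantorSet hu n
      exact ⟨(x, y), ⟨hx, hy⟩, hxy⟩)
    ((isCompact_Icc.prod isCompact_Icc).of_isClosed_subset (hF 0) inter_subset_left) hF
  simp only [F, mem_iInter] at hp
  exact ⟨p.1, mem_iInter.2 fun n => (hp n).1.1, p.2, mem_iInter.2 fun n => (hp n).1.2, (hp 0).2⟩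

theorem image_affine_cantorK_subset {a t : ℝ} (ht : 0 ≤ t) :
    (fun x => a + 3 * t * x) '' cantorK ⊆ Icc a (a + 3 * t) := by
  rintro _ ⟨x, hx, rfl⟩
  obtain ⟨hx₀, hx₁⟩ := cantorSet_subset_unitInterval (cantorK_eq_cantorSet ▸ hx)
  constructor <;> nlinarith

theorem pset_affine_cantorK_eq {a b t : ℝ} (ht : 0 ≤ t) (hgap : a + 3 * t ≤ b)
    (hratio : b + 3 * t ≤ 3 * a) :
    Pset ((fun x => a + 3 * t * x) '' cantorK) ((fun x => b + 3 * t * x) '' cantorK)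
      = Pset (Icc a (a + 3 * t)) (Icc b (b + 3 * t)) := by
  refine (image2_subset (image_affine_cantorK_subset ht)
    (image_affine_cantorK_subset ht)).antisymm ?_
  rintro _ ⟨x, hx, y, hy, rfl⟩
  have hadm : Admissible (x * y) a b t :=
    ⟨by linarith, hratio, mul_le_mul hx.1 hy.1 (by linarith) (by linarith [hx.1]),
      mul_le_mul hx.2 hy.2 (by linarith [hy.1]) (by linarith)⟩
  obtain ⟨X, hX, Y, hY, hXY⟩ := hadm.exists_mem_cantorSet ht
  rw [cantorK_eq_cantorSet]
  exact ⟨_, mem_image_of_mem _ hX, _, mem_image_of_mem _ hY, hXY⟩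

theorem pset_comm (E F : Set ℝ) : Pset E F = Pset F E := by
  simp only [Pset, image2_swap (· * ·) E, mul_comm]

theorem lt_or_lt_of_disjoint_Icc {α : Type*} [LinearOrder α] {a₁ a₂ b₁ b₂ : α} (ha : a₁ ≤ a₂)
    (hb : b₁ ≤ b₂) (h : Disjoint (Icc a₁ a₂) (Icc b₁ b₂)) : a₂ < b₁ ∨ b₂ < a₁ := by
  by_contra! hab
  exact disjoint_left.1 h ⟨le_max_left _ _, max_le ha hab.1⟩ ⟨le_max_right _ _, max_le hab.2 hb⟩

theorem stmt4 (a b t : ℝ) (ht : 0 < t)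
    (hI : Icc a (a + 3*t) ⊆ Icc (2/3) 1) (hJ : Icc b (b + 3*t) ⊆ Icc (2/3) 1)
    (hdisj : Disjoint (Icc a (a + 3*t)) (Icc b (b + 3*t))) :
    Pset ((fun x : ℝ => a + 3*t*x) '' cantorK) ((fun x : ℝ => b + 3*t*x) '' cantorK)
      = Pset (Icc a (a + 3*t)) (Icc b (b + 3*t)) := by
  obtain ⟨ha, ha₁⟩ := (Icc_subset_Icc_iff (by linarith)).1 hI
  obtain ⟨hb, hb₁⟩ := (Icc_subset_Icc_iff (by linarith)).1 hJ
  rcases lt_or_lt_of_disjoint_Icc (by linarith) (by linarith) hdisj with hab | hba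
  · exact pset_affine_cantorK_eq ht.le hab.le (by linarith)
  · rw [pset_comm, pset_comm (Icc a _)]
    exact pset_affine_cantorK_eq ht.le hba.le (by linarith)
end

section
/- With B and the fast subdivision (D_n)_{n≥0} of [2/3,1] as defined, every connected component of D_n with nonempty interior is a triadic interval of the form [m/3^k, (m+1)/3^k] for integers m and k ≥ 1. -/
open Set MeasureTheory

/-- Orientation-preserving affine bijection from `[0,1]` onto the interval `I`. -/
noncomputable def affI (I : Set ℝ) (x : ℝ) : ℝ := sInf I + (sSup I - sInf I) * x

/-- The family of connected components of `S` with nonempty interior. -/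
def compsE (S : Set ℝ) : Set (Set ℝ) :=
  {I | (∃ x ∈ S, I = connectedComponentIn S x) ∧ (interior I).Nonempty}

/-- The union `B` of gaps removed from `[0,1]` in the fast subdivision. -/
noncomputable def gapB : Set ℝ :=
  (⋃ k : ℕ, Ioo ((1:ℝ)/3^(k+2)) (2/3^(k+2))) ∪ Ioo (1/3) (2/3) ∪
  ⋃ k : ℕ, Ioo (((3:ℝ)^(k+2) - 2)/3^(k+2)) ((3^(k+2) - 1)/3^(k+2))

/-- The fast subdivision of `[2/3, 1]`. -/
noncomputable def fastD : ℕ → Set ℝ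
  | 0 => Icc (2/3) 1
  | n + 1 => fastD n \ ⋃ I ∈ compsE (fastD n), affI I '' gapB

/-!
`gapB` consists of the gaps `(1/3^(m+1), 2/3^(m+1))` and their mirror images under `x ↦ 1 - x`,
so the components of `[0,1] \ gapB` with nonempty interior are the intervals
`[2/3^(m+2), 3/3^(m+2)]` between two consecutive gaps and their mirror images: all triadic.
Since `A_I(gapB) ⊆ I` and distinct components are disjoint, the part of `D_{n+1}` inside a
component `I` of `D_n` is `A_I([0,1] \ gapB)`, so every component of `D_{n+1}` with interior is
the image under `A_I` of such a triadic interval; when `I` is triadic, so is that image.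
-/

lemma connectedComponentIn_eq_Icc {S : Set ℝ} {a b a' b' x : ℝ} (hS : Icc a b ⊆ S)
    (hx : x ∈ Icc a b) (ha' : a' < a) (hb' : b < b') (ha : Disjoint (Ioo a' a) S)
    (hb : Disjoint (Ioo b b') S) : connectedComponentIn S x = Icc a b := by
  refine Subset.antisymm (fun q hq ↦ ?_) (isPreconnected_Icc.subset_connectedComponentIn hx hS)
  have hC : (connectedComponentIn S x).OrdConnected :=
    isPreconnected_connectedComponentIn.ordConnected
  have hxC := mem_connectedComponentIn (hS hx)
  constructor
  · by_contra! hqa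
    have hz : max q ((a' + a) / 2) ∈ connectedComponentIn S x :=
      hC.out hq hxC ⟨le_max_left _ _, max_le (by linarith [hx.1]) (by linarith [hx.1])⟩
    refine disjoint_left.1 ha ⟨?_, ?_⟩ (connectedComponentIn_subset _ _ hz)
    · exact (by linarith : a' < (a' + a) / 2).trans_le (le_max_right _ _)
    · exact max_lt hqa (by linarith)
  · by_contra! hqb
    have hz : min q ((b + b') / 2) ∈ connectedComponentIn S x :=
      hC.out hxC hq ⟨le_min (by linarith [hx.2]) (by linarith [hx.2]), min_le_left _ _⟩
    refine disjoint_left.1 hb ⟨?_, ?_⟩ (connectedComponentIn_subset _ _ hz)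
    · exact lt_min hqb (by linarith)
    · exact (min_le_right _ _).trans_lt (by linarith)

lemma connectedComponentIn_inter_of_subset {X : Type*} [TopologicalSpace X] {F T : Set X}
    {x : X} (h : connectedComponentIn F x ⊆ T) :
    connectedComponentIn (F ∩ T) x = connectedComponentIn F x := by
  refine Subset.antisymm (connectedComponentIn_mono x inter_subset_left) ?_
  by_cases hx : x ∈ F
  · exact isPreconnected_connectedComponentIn.subset_connectedComponentIn
      (mem_connectedComponentIn hx) (subset_inter (connectedComponentIn_subset _ _) h)
  · simp [connectedComponentIn_eq_empty hx]

lemma subset_of_mem_compsE {S I : Set ℝ} (hI : I ∈ compsE S) : I ⊆ S := by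
  obtain ⟨⟨u, -, rfl⟩, -⟩ := hI
  exact connectedComponentIn_subset _ _

lemma eq_of_mem_compsE_of_mem {S I I' : Set ℝ} {z : ℝ} (hI : I ∈ compsE S)
    (hI' : I' ∈ compsE S) (hz : z ∈ I) (hz' : z ∈ I') : I' = I := by
  obtain ⟨⟨u, -, rfl⟩, -⟩ := hI
  obtain ⟨⟨u', -, rfl⟩, -⟩ := hI'
  rw [connectedComponentIn_eq hz, connectedComponentIn_eq hz']

lemma mem_gapB_iff {x : ℝ} : x ∈ gapB ↔
    ∃ m : ℕ, x ∈ Ioo (1 / 3 ^ (m + 1)) (2 / 3 ^ (m + 1)) ∨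
      1 - x ∈ Ioo (1 / 3 ^ (m + 1)) (2 / 3 ^ (m + 1)) := by
  have hsub (k : ℕ) (c : ℝ) : ((3 : ℝ) ^ (k + 2) - c) / 3 ^ (k + 2) = 1 - c / 3 ^ (k + 2) := by
    rw [sub_div, div_self (by positivity)]
  simp only [gapB, mem_union, mem_iUnion, hsub, mem_Ioo]
  constructor
  · rintro ((⟨k, hk⟩ | hk) | ⟨k, hk⟩)
    · exact ⟨k + 1, .inl hk⟩
    · exact ⟨0, .inl (by norm_num [hk])⟩
    · exact ⟨k + 1, .inr ⟨by linarith, by linarith⟩⟩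
  · rintro ⟨_ | k, hk | hk⟩
    · exact .inl (.inr (by norm_num at hk; exact hk))
    · exact .inl (.inr (by norm_num at hk; constructor <;> linarith))
    · exact .inl (.inl ⟨k, hk⟩)
    · exact .inr ⟨k, by linarith, by linarith⟩

lemma Ioo_subset_gapB (m : ℕ) : Ioo (1 / 3 ^ (m + 1) : ℝ) (2 / 3 ^ (m + 1)) ⊆ gapB :=
  fun _ hx ↦ mem_gapB_iff.2 ⟨m, .inl hx⟩

lemma one_sub_mem_gapB_iff {x : ℝ} : 1 - x ∈ gapB ↔ x ∈ gapB := by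
  simp only [mem_gapB_iff, sub_sub_cancel, or_comm]

lemma gapB_subset_Icc : gapB ⊆ Icc (0 : ℝ) 1 := by
  have hgap (m : ℕ) {y : ℝ} (hy : y ∈ Ioo (1 / 3 ^ (m + 1) : ℝ) (2 / 3 ^ (m + 1))) :
      0 ≤ y ∧ y ≤ 2 / 3 := by
    have h3 : (3 : ℝ) ≤ 3 ^ (m + 1) := le_self_pow₀ (by norm_num) (by omega)
    have : 2 / 3 ^ (m + 1) ≤ (2 / 3 : ℝ) :=
      div_le_div_of_nonneg_left (by norm_num) (by norm_num) h3
    exact ⟨(by positivity : (0 : ℝ) ≤ 1 / 3 ^ (m + 1)).trans hy.1.le, hy.2.le.trans this⟩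
  intro x hx
  obtain ⟨m, h | h⟩ := mem_gapB_iff.1 hx
  · have := hgap m h; constructor <;> linarith
  · have := hgap m h; constructor <;> linarith

def keptSet : Set ℝ := Icc 0 1 \ gapB

lemma one_sub_mem_keptSet {x : ℝ} (hx : x ∈ keptSet) : 1 - x ∈ keptSet :=
  ⟨⟨by linarith [hx.1.2], by linarith [hx.1.1]⟩, fun h ↦ hx.2 (one_sub_mem_gapB_iff.1 h)⟩

lemma disjoint_keptSet_of_subset_gapB {s : Set ℝ} (hs : s ⊆ gapB) : Disjoint s keptSet :=
  disjoint_sdiff_right.mono_left hs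

/-- The interval of `keptSet` between the gaps `(1/3^(m+2), 2/3^(m+2))` and
`(1/3^(m+1), 2/3^(m+1))`. -/
def keptIcc (m : ℕ) : Set ℝ := Icc (2 / 3 ^ (m + 2)) (1 / 3 ^ (m + 1))

lemma keptIcc_subset_keptSet (m : ℕ) : keptIcc m ⊆ keptSet := by
  intro x ⟨hx₁, hx₂⟩
  have h3 : (1 : ℝ) / 3 ^ (m + 1) ≤ 1 / 3 ^ 1 :=
    one_div_pow_le_one_div_pow_of_le (by norm_num) (by omega)
  refine ⟨⟨(by positivity : (0 : ℝ) ≤ 2 / 3 ^ (m + 2)).trans hx₁, by linarith⟩, fun hx ↦ ?_⟩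
  obtain ⟨i, ⟨hi₁, hi₂⟩ | ⟨hi₁, hi₂⟩⟩ := mem_gapB_iff.1 hx
  · rcases le_or_gt i m with him | him
    · have : (1 : ℝ) / 3 ^ (m + 1) ≤ 1 / 3 ^ (i + 1) :=
        one_div_pow_le_one_div_pow_of_le (by norm_num) (by omega)
      linarith
    · have : (2 : ℝ) / 3 ^ (i + 1) ≤ 2 / 3 ^ (m + 2) :=
        div_le_div_of_nonneg_left (by norm_num) (by positivity)
          (pow_le_pow_right₀ (by norm_num) (by omega))
      linarith
  · have : (2 : ℝ) / 3 ^ (i + 1) ≤ 2 / 3 ^ 1 :=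
      div_le_div_of_nonneg_left (by norm_num) (by positivity)
        (pow_le_pow_right₀ (by norm_num) (by omega))
    rw [pow_one] at h3 this
    linarith

lemma exists_mem_keptIcc_of_le_one_third {x : ℝ} (h₀ : 0 < x) (h₃ : x ≤ 1 / 3)
    (hx : x ∉ gapB) : ∃ m, x ∈ keptIcc m := by
  obtain ⟨_ | m, hlt, hle⟩ :=
    exists_nat_pow_near_of_lt_one h₀ (by linarith) (by norm_num : (0 : ℝ) < 1 / 3) (by norm_num)
  · norm_num at hlt; linarith
  rw [one_div_pow] at hlt hle
  exact ⟨m, not_lt.1 fun h ↦ hx (Ioo_subset_gapB (m + 1) ⟨hlt, h⟩), hle⟩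

lemma exists_mem_keptIcc {x : ℝ} (hx : x ∈ keptSet) (h₀ : 0 < x) (h₁ : x < 1) :
    ∃ m, x ∈ keptIcc m ∨ 1 - x ∈ keptIcc m := by
  rcases le_or_gt x (1 / 3) with hx₃ | hx₃
  · exact (exists_mem_keptIcc_of_le_one_third h₀ hx₃ hx.2).imp fun _ ↦ .inl
  rcases lt_or_ge x (2 / 3) with hx₃' | hx₃'
  · exact absurd (Ioo_subset_gapB 0 (by norm_num; exact ⟨hx₃, hx₃'⟩)) hx.2
  · refine (exists_mem_keptIcc_of_le_one_third (by linarith) (by linarith) ?_).imp fun _ ↦ .inr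
    exact (one_sub_mem_keptSet hx).2

lemma connectedComponentIn_keptSet_of_mem_keptIcc {x : ℝ} {m : ℕ} (hx : x ∈ keptIcc m) :
    connectedComponentIn keptSet x = keptIcc m := by
  refine connectedComponentIn_eq_Icc (keptIcc_subset_keptSet m) hx (a' := 1 / 3 ^ (m + 2))
    (b' := 2 / 3 ^ (m + 1)) ?_ ?_ (disjoint_keptSet_of_subset_gapB (Ioo_subset_gapB (m + 1)))
    (disjoint_keptSet_of_subset_gapB (Ioo_subset_gapB m))
  · gcongr; norm_num
  · gcongr; norm_num

lemma connectedComponentIn_keptSet_of_one_sub_mem_keptIcc {x : ℝ} {m : ℕ}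
    (hx : 1 - x ∈ keptIcc m) :
    connectedComponentIn keptSet x = Icc (1 - 1 / 3 ^ (m + 1)) (1 - 2 / 3 ^ (m + 2)) := by
  refine connectedComponentIn_eq_Icc (a' := 1 - 2 / 3 ^ (m + 1)) (b' := 1 - 1 / 3 ^ (m + 2))
    (fun y ⟨hy₁, hy₂⟩ ↦ ?_) ⟨by linarith [hx.2], by linarith [hx.1]⟩ ?_ ?_ ?_ ?_
  · have hy : 1 - y ∈ keptIcc m := ⟨by linarith, by linarith⟩
    simpa using one_sub_mem_keptSet (keptIcc_subset_keptSet m hy)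
  · gcongr; norm_num
  · gcongr; norm_num
  · refine disjoint_keptSet_of_subset_gapB fun y ⟨hy₁, hy₂⟩ ↦ one_sub_mem_gapB_iff.1 ?_
    exact Ioo_subset_gapB m ⟨by linarith, by linarith⟩
  · refine disjoint_keptSet_of_subset_gapB fun y ⟨hy₁, hy₂⟩ ↦ one_sub_mem_gapB_iff.1 ?_
    exact Ioo_subset_gapB (m + 1) ⟨by linarith, by linarith⟩

def IsTriadic (I : Set ℝ) : Prop :=
  ∃ (m : ℤ) (k : ℕ), 1 ≤ k ∧ I = Icc ((m : ℝ) / 3 ^ k) ((m + 1 : ℝ) / 3 ^ k)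

lemma IsTriadic.exists_Icc {I : Set ℝ} (hI : IsTriadic I) : ∃ a b, a < b ∧ I = Icc a b := by
  obtain ⟨m, k, -, rfl⟩ := hI
  exact ⟨_, _, div_lt_div_of_pos_right (lt_add_one _) (by positivity), rfl⟩

lemma isTriadic_of_mem_compsE_keptSet {K : Set ℝ} (hK : K ∈ compsE keptSet) : IsTriadic K := by
  obtain ⟨⟨y, -, rfl⟩, u, hu⟩ := hK
  have hu01 : u ∈ Ioo (0 : ℝ) 1 := by
    rw [← interior_Icc]
    exact interior_mono ((connectedComponentIn_subset _ _).trans sdiff_subset) hu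
  have huC := interior_subset hu
  rw [connectedComponentIn_eq huC]
  obtain ⟨m, h⟩ := exists_mem_keptIcc (connectedComponentIn_subset _ _ huC) hu01.1 hu01.2
  have h3 : (3 : ℝ) ^ (m + 2) = 3 * 3 ^ (m + 1) := pow_succ' _ _
  rcases h with h | h
  · refine ⟨2, m + 2, by omega, ?_⟩
    rw [connectedComponentIn_keptSet_of_mem_keptIcc h, keptIcc]
    push_cast
    congr 1
    field_simp
    linarith
  · refine ⟨3 ^ (m + 2) - 3, m + 2, by omega, ?_⟩
    rw [connectedComponentIn_keptSet_of_one_sub_mem_keptIcc h]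
    congr 1 <;> push_cast <;> field_simp <;> ring_nf

lemma affI_Icc {a b : ℝ} (h : a ≤ b) : affI (Icc a b) = fun y ↦ (b - a) * y + a := by
  funext y
  simp only [affI, csInf_Icc h, csSup_Icc h]
  ring

lemma affI_Icc_image_subset {a b : ℝ} {s : Set ℝ} (h : a ≤ b) (hs : s ⊆ Icc 0 1) :
    affI (Icc a b) '' s ⊆ Icc a b := by
  rw [affI_Icc h]
  rintro _ ⟨y, hy, rfl⟩
  obtain ⟨hy₀, hy₁⟩ := hs hy
  constructor <;> nlinarith

lemma IsTriadic.affI_image {I K : Set ℝ} (hI : IsTriadic I) (hK : IsTriadic K) :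
    IsTriadic (affI I '' K) := by
  obtain ⟨m, k, hk, rfl⟩ := hI
  obtain ⟨c, j, -, rfl⟩ := hK
  have hpos : (0 : ℝ) < (m + 1) / 3 ^ k - m / 3 ^ k := by
    rw [← sub_div]; norm_num
  refine ⟨m * 3 ^ j + c, k + j, by omega, ?_⟩
  rw [affI_Icc (sub_nonneg.1 hpos.le), image_affine_Icc' hpos]
  congr 1 <;> push_cast [pow_add] <;> field_simp <;> ring

lemma sdiff_biUnion_inter_eq {S I : Set ℝ} (hS : ∀ I ∈ compsE S, ∃ a b, a < b ∧ I = Icc a b)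
    (hI : I ∈ compsE S) : (S \ ⋃ I' ∈ compsE S, affI I' '' gapB) ∩ I = I \ affI I '' gapB := by
  ext z
  simp only [mem_inter_iff, mem_sdiff, mem_iUnion, exists_prop, not_exists, not_and]
  constructor
  · rintro ⟨⟨-, hzU⟩, hzI⟩
    exact ⟨hzI, hzU I hI⟩
  · rintro ⟨hzI, hzf⟩
    refine ⟨⟨subset_of_mem_compsE hI hzI, fun I' hI' hz ↦ ?_⟩, hzI⟩
    obtain ⟨a, b, hab, rfl⟩ := hS I' hI'
    have hzI' := affI_Icc_image_subset hab.le gapB_subset_Icc hz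
    exact hzf (eq_of_mem_compsE_of_mem hI hI' hzI hzI' ▸ hz)

lemma exists_eq_affI_image_of_mem_compsE_sdiff {S J : Set ℝ}
    (hS : ∀ I ∈ compsE S, ∃ a b, a < b ∧ I = Icc a b)
    (hJ : J ∈ compsE (S \ ⋃ I ∈ compsE S, affI I '' gapB)) :
    ∃ I ∈ compsE S, ∃ K ∈ compsE keptSet, J = affI I '' K := by
  set S' := S \ ⋃ I ∈ compsE S, affI I '' gapB
  obtain ⟨⟨x, hx, rfl⟩, hint⟩ := hJ
  have hJI : connectedComponentIn S' x ⊆ connectedComponentIn S x :=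
    connectedComponentIn_mono x sdiff_subset
  have hI : connectedComponentIn S x ∈ compsE S :=
    ⟨⟨x, hx.1, rfl⟩, hint.mono (interior_mono hJI)⟩
  obtain ⟨a, b, hab, hIab⟩ := hS _ hI
  set f := affineHomeomorph (b - a) a (sub_pos.2 hab).ne'
  have hf : affI (connectedComponentIn S x) = f := by rw [hIab, affI_Icc hab.le]; rfl
  have hS'I : S' ∩ connectedComponentIn S x = f '' keptSet := by
    rw [sdiff_biUnion_inter_eq hS hI, hf, keptSet, image_sdiff f.injective,
      affineHomeomorph_image_Icc _ _ _ _ (sub_pos.2 hab), hIab]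
    simp
  obtain ⟨y, hy, rfl⟩ : x ∈ f '' keptSet := hS'I ▸ ⟨hx, mem_connectedComponentIn hx.1⟩
  have hJK : connectedComponentIn S' (f y) = f '' connectedComponentIn keptSet y := by
    rw [← connectedComponentIn_inter_of_subset hJI, hS'I, f.image_connectedComponentIn hy]
  refine ⟨_, hI, _, ⟨⟨y, hy, rfl⟩, ?_⟩, by rw [hJK, hf]⟩
  rw [hJK, ← f.image_interior] at hint
  exact hint.of_image

theorem stmt8 (n : ℕ) (I : Set ℝ) (hI : I ∈ compsE (fastD n)) :
    ∃ (m : ℤ) (k : ℕ), 1 ≤ k ∧ I = Icc ((m : ℝ)/3^k) ((m + 1 : ℝ)/3^k) := by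
  suffices h : ∀ I ∈ compsE (fastD n), IsTriadic I from h I hI
  clear hI I
  induction n with
  | zero =>
    rintro _ ⟨⟨x, hx, rfl⟩, -⟩
    refine ⟨2, 1, le_rfl, ?_⟩
    rw [fastD, isPreconnected_Icc.connectedComponentIn hx]
    norm_num
  | succ n ih =>
    intro J hJ
    obtain ⟨I, hI, K, hK, rfl⟩ :=
      exists_eq_affI_image_of_mem_compsE_sdiff (fun I hI ↦ (ih I hI).exists_Icc) hJ
    exact (ih I hI).affI_image (isTriadic_of_mem_compsE_keptSet hK)
end

section
/- For every real number y ∈ [0,1] there exist x₁, x₂, x₃ in the middle-third Cantor set K with y = x₁·x₂·x₃. Equivalently, the set {x²·z : x, z ∈ K} contains [0,1]. -/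
open Set

/-!
Write `f (x, y) = x² y` and `C` for the Cantor set. If `a, b ≥ 2/3` are left ends of level-`n`
cells of `C` (intervals of length `3s = 3⁻ⁿ`) and `u` lies between the values of `f` at the
corners of the box `[a, a + 3s] × [b, b + 3s]`, then `u` still lies in the `f`-image of one of the
four corner subboxes of side `s`: the images of the two columns, and then of the two rows, overlap
because `f` grows slowly enough in the region `[2/3, 1]²`. Iterating gives points of `C × C` at
which `f` approximates any `u ∈ [8/27, 1]` to within `3⁻ⁿ`, and `f (C × C)` is compact. Finally
`x² (z / 3ⁿ) = 3⁻ⁿ x² z` reaches the rest of `(0, 1]`.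
-/

open Real

lemma cantorSet_subset_cantorK : cantorSet ⊆ cantorK := by
  rw [cantorSet_eq_zero_two_ofDigits]
  rintro _ ⟨d, hd, rfl⟩
  refine ⟨fun k => (d k : ℝ), fun k => ?_, by simp [ofDigits, ofDigitsTerm, div_eq_mul_inv]⟩
  obtain h | h : d k = 0 ∨ d k = 2 := by have := hd k; omega
  all_goals simp [h]

lemma one_mem_cantorSet : (1 : ℝ) ∈ cantorSet :=
  ofDigits_const_last_eq_one 2 ▸ ofDigits_zero_two_sequence_mem_cantorSet fun _ => by decide

lemma mem_cantorSet_div_three {x : ℝ} (hx : x ∈ cantorSet) : x / 3 ∈ cantorSet := by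
  rw [cantorSet_eq_union_halves]
  exact Or.inl ⟨x, hx, rfl⟩

lemma mem_cantorSet_two_add_div_three {x : ℝ} (hx : x ∈ cantorSet) :
    (2 + x) / 3 ∈ cantorSet := by
  rw [cantorSet_eq_union_halves]
  exact Or.inr ⟨x, hx, rfl⟩

/-- `a` is the left end of a level-`n` cell of the Cantor set. -/
def IsCantorCell (n : ℕ) (a : ℝ) : Prop :=
  ∀ x ∈ cantorSet, a + x / 3 ^ n ∈ cantorSet

namespace IsCantorCell

variable {n : ℕ} {a : ℝ}

lemma mem (h : IsCantorCell n a) : a ∈ cantorSet := by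
  simpa using h 0 zero_mem_cantorSet

lemma add_le_one (h : IsCantorCell n a) : a + 1 / 3 ^ n ≤ 1 :=
  (cantorSet_subset_unitInterval (h 1 one_mem_cantorSet)).2

lemma succ (h : IsCantorCell n a) : IsCantorCell (n + 1) a := fun x hx => by
  simpa [pow_succ, div_div, mul_comm] using h _ (mem_cantorSet_div_three hx)

lemma succ_add (h : IsCantorCell n a) : IsCantorCell (n + 1) (a + 2 / 3 ^ (n + 1)) :=
  fun x hx => by
    convert h _ (mem_cantorSet_two_add_div_three hx) using 1
    field_simp
    ring

end IsCantorCell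

lemma isCantorCell_zero (n : ℕ) : IsCantorCell n 0 := by
  induction n with
  | zero => simp [IsCantorCell]
  | succ n ih => exact ih.succ

lemma exists_corner_subbox {u a b s : ℝ} (hs : 0 ≤ s) (ha : 2 / 3 ≤ a) (hb : 2 / 3 ≤ b)
    (ha₁ : a + 2 * s ≤ 1) (hb₁ : b ≤ 1) (hl : a ^ 2 * b ≤ u)
    (hr : u ≤ (a + 3 * s) ^ 2 * (b + 3 * s)) :
    ∃ a' ∈ ({a, a + 2 * s} : Set ℝ), ∃ b' ∈ ({b, b + 2 * s} : Set ℝ),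
      a' ^ 2 * b' ≤ u ∧ u ≤ (a' + s) ^ 2 * (b' + s) := by
  have overlap_columns : (a + 2 * s) ^ 2 * b ≤ (a + s) ^ 2 * (b + 3 * s) := by
    have h : 0 ≤ a * (3 * a - 2 * b) + 3 * s * (2 * a - b) + 3 * s ^ 2 :=
      add_nonneg (add_nonneg (mul_nonneg (by linarith) (by linarith))
        (mul_nonneg (by positivity) (by linarith))) (by positivity)
    linear_combination mul_nonneg hs h
  obtain ⟨a', ha', hl', hr'⟩ : ∃ a' ∈ ({a, a + 2 * s} : Set ℝ),
      a' ^ 2 * b ≤ u ∧ u ≤ (a' + s) ^ 2 * (b + 3 * s) := by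
    rcases le_total u ((a + s) ^ 2 * (b + 3 * s)) with h | h
    · exact ⟨a, Or.inl rfl, hl, h⟩
    · exact ⟨a + 2 * s, Or.inr rfl, by linarith, by linarith⟩
  have ha'₀ : 0 ≤ a' := by rcases ha' with rfl | rfl <;> linarith
  have ha'₁ : a' ≤ 1 := by rcases ha' with rfl | rfl <;> linarith
  have overlap_rows : a' ^ 2 * (b + 2 * s) ≤ (a' + s) ^ 2 * (b + s) := by
    have h : 0 ≤ a' * (2 * b - a') + s * (2 * a' + b + s) :=
      add_nonneg (mul_nonneg ha'₀ (by linarith)) (by positivity)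
    linear_combination mul_nonneg hs h
  refine ⟨a', ha', ?_⟩
  rcases le_total u ((a' + s) ^ 2 * (b + s)) with h | h
  · exact ⟨b, Or.inl rfl, hl', h⟩
  · exact ⟨b + 2 * s, Or.inr rfl, by linarith, by linarith⟩

lemma exists_isCantorCell_sq_mul_bracket {u : ℝ} (hu : u ∈ Icc (8 / 27) 1) (n : ℕ) :
    ∃ a b, IsCantorCell (n + 1) a ∧ IsCantorCell (n + 1) b ∧ 2 / 3 ≤ a ∧ 2 / 3 ≤ b ∧
      a ^ 2 * b ≤ u ∧ u ≤ (a + 1 / 3 ^ (n + 1)) ^ 2 * (b + 1 / 3 ^ (n + 1)) := by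
  induction n with
  | zero =>
    have h : IsCantorCell 1 (2 / 3) := by simpa using (isCantorCell_zero 0).succ_add
    exact ⟨2 / 3, 2 / 3, h, h, le_rfl, le_rfl, by norm_num [hu.1], by norm_num [hu.2]⟩
  | succ n ih =>
    obtain ⟨a, b, ha, hb, ha₀, hb₀, hl, hr⟩ := ih
    set s : ℝ := 1 / 3 ^ (n + 2)
    have hs : 0 ≤ s := by positivity
    have h3s : 1 / 3 ^ (n + 1) = 3 * s := by simp only [s]; field_simp; ring
    have h2s : 2 / 3 ^ (n + 2) = 2 * s := by simp only [s]; ring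
    have ha₁ := ha.add_le_one
    have hb₁ := hb.add_le_one
    rw [h3s] at ha₁ hb₁ hr
    obtain ⟨a', ha', b', hb', hl', hr'⟩ :=
      exists_corner_subbox hs ha₀ hb₀ (by linarith) (by linarith) hl hr
    have cell {c c'} (hc : IsCantorCell (n + 1) c) (hc' : c' ∈ ({c, c + 2 * s} : Set ℝ)) :
        IsCantorCell (n + 2) c' := by
      rcases hc' with rfl | rfl
      · exact hc.succ
      · simpa [h2s] using hc.succ_add
    refine ⟨a', b', cell ha ha', cell hb hb', ?_, ?_, hl', hr'⟩
    · rcases ha' with rfl | rfl <;> linarith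
    · rcases hb' with rfl | rfl <;> linarith

lemma sq_mul_sub_sq_mul_le {a b e : ℝ} (ha : 0 ≤ a) (hb : 0 ≤ b) (he : 0 ≤ e)
    (ha₁ : a + e ≤ 1) (hb₁ : b + e ≤ 1) : (a + e) ^ 2 * (b + e) - a ^ 2 * b ≤ 3 * e := by
  have h₁ : (2 * a + e) * (b + e) ≤ 2 := by nlinarith
  have h₂ : a ^ 2 ≤ 1 := by nlinarith
  nlinarith

lemma Icc_subset_image_sq_mul :
    Icc (8 / 27 : ℝ) 1 ⊆ (fun p : ℝ × ℝ => p.1 ^ 2 * p.2) '' cantorSet ×ˢ cantorSet := by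
  intro u hu
  have hclosed : IsClosed ((fun p : ℝ × ℝ => p.1 ^ 2 * p.2) '' cantorSet ×ˢ cantorSet) :=
    ((isCompact_cantorSet.prod isCompact_cantorSet).image (by fun_prop)).isClosed
  refine hclosed.closure_subset (Metric.mem_closure_iff.2 fun ε hε => ?_)
  obtain ⟨n, hn⟩ := exists_pow_lt_of_lt_one (by positivity : 0 < ε / 3) (by norm_num : (1 / 3 : ℝ) < 1)
  obtain ⟨a, b, ha, hb, ha₀, hb₀, hl, hr⟩ := exists_isCantorCell_sq_mul_bracket hu n
  refine ⟨a ^ 2 * b, ⟨(a, b), ⟨ha.mem, hb.mem⟩, rfl⟩, ?_⟩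
  have hwidth := sq_mul_sub_sq_mul_le (by linarith) (by linarith) (by positivity)
    ha.add_le_one hb.add_le_one
  have he : 1 / (3 : ℝ) ^ (n + 1) ≤ (1 / 3) ^ n := by
    rw [one_div_pow]; gcongr <;> norm_num
  rw [Real.dist_eq, abs_of_nonneg (by linarith)]
  linarith

lemma exists_sq_mul_eq {y : ℝ} (hy : y ∈ Icc 0 1) :
    ∃ x ∈ cantorSet, ∃ z ∈ cantorSet, y = x ^ 2 * z := by
  rcases hy.1.eq_or_lt with rfl | hy₀
  · exact ⟨0, zero_mem_cantorSet, 0, zero_mem_cantorSet, by ring⟩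
  obtain ⟨n, hn₁, hn₂⟩ :=
    exists_nat_pow_near_of_lt_one hy₀ hy.2 (by norm_num : (0 : ℝ) < 1 / 3) (by norm_num)
  have h3n : (0 : ℝ) < 3 ^ n := by positivity
  have hv : 3 ^ n * y ∈ Icc (8 / 27 : ℝ) 1 := by
    rw [one_div_pow] at hn₁ hn₂
    rw [pow_succ, div_lt_iff₀ (by positivity)] at hn₁
    rw [le_div_iff₀ h3n] at hn₂
    constructor <;> nlinarith
  obtain ⟨⟨x, z⟩, ⟨hx, hz⟩, hxz⟩ := Icc_subset_image_sq_mul hv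
  refine ⟨x, hx, z / 3 ^ n, by simpa using isCantorCell_zero n z hz, ?_⟩
  field_simp
  linarith [hxz]

theorem stmt19 :
    (∀ y ∈ Icc (0:ℝ) 1, ∃ x₁ ∈ cantorK, ∃ x₂ ∈ cantorK, ∃ x₃ ∈ cantorK,
      y = x₁ * x₂ * x₃) ∧
    Icc (0:ℝ) 1 ⊆ {y | ∃ x ∈ cantorK, ∃ z ∈ cantorK, y = x^2 * z} := by
  have h : ∀ y ∈ Icc (0:ℝ) 1, ∃ x ∈ cantorK, ∃ z ∈ cantorK, y = x ^ 2 * z := fun y hy => by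
    obtain ⟨x, hx, z, hz, rfl⟩ := exists_sq_mul_eq hy
    exact ⟨x, cantorSet_subset_cantorK hx, z, cantorSet_subset_cantorK hz, rfl⟩
  refine ⟨fun y hy => ?_, h⟩
  obtain ⟨x, hx, z, hz, rfl⟩ := h y hy
  exact ⟨x, hx, x, hx, z, hz, by ring⟩
end
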